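/- (Asymptotic efficiency in Theorem 3.) Fix full-support probability distributions μ ≠ π on 𝒴. For each M ≥ 3, let V*(M) be the minimum of D(q_1‖μ) + D(q_2‖π) + … + D(q_M‖π) over all M-tuples of probability distributions (q_1,…,q_M) on 𝒴 satisfying Σ_{j≠1} D( q_j ‖ (Σ_{k≠1} q_k)/(M−1) ) ≥ Σ_{j≠2} D( q_j ‖ (Σ_{k≠2} q_k)/(M−1) ). Then lim_{M→∞} V*(M) = 2·B(μ, π). -/

import Mathlib

open Filter Finset Topology

noncomputable section

/-- `p` is a probability distribution on the finite alphabet. -/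
def IsProb {𝓨 : Type} [Fintype 𝓨] (p : 𝓨 → ℝ) : Prop :=
  (∀ y, 0 ≤ p y) ∧ ∑ y, p y = 1

/-- `p` has full support. -/
def FullSupport {𝓨 : Type} (p : 𝓨 → ℝ) : Prop := ∀ y, 0 < p y

/-- Relative entropy `D(q‖p)` (natural log, convention `0·log 0 = 0`,
which holds since `Real.log 0 = 0` in Mathlib). -/
def KL {𝓨 : Type} [Fintype 𝓨] (q p : 𝓨 → ℝ) : ℝ :=
  ∑ y, q y * Real.log (q y / p y)

/-- Bhattacharyya distance `B(p,q) = -log ∑ √(p y) √(q y)`. -/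
def Bhat {𝓨 : Type} [Fintype 𝓨] (p q : 𝓨 → ℝ) : ℝ :=
  - Real.log (∑ y, Real.sqrt (p y) * Real.sqrt (q y))

/-- The feasible values of the optimization problem in Theorem 2: tuples
`(q_1, …, q_M)` of distributions (indexed here by `0, …, M-1`) satisfying
`∑_{j≠1} D(q_j ‖ (∑_{k≠1} q_k)/(M-1)) ≥ ∑_{j≠2} D(q_j ‖ (∑_{k≠2} q_k)/(M-1))`,
with objective `D(q_1‖μ) + D(q_2‖π) + … + D(q_M‖π)`. -/
def VstarSet {𝓨 : Type} [Fintype 𝓨] (μ π : 𝓨 → ℝ) (M : ℕ) : Set ℝ :=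
  {x | ∃ q : ℕ → 𝓨 → ℝ, (∀ j < M, IsProb (q j)) ∧
    (∑ j ∈ Finset.range M \ {0}, KL (q j)
        (fun a => (∑ k ∈ Finset.range M \ {0}, q k a) / ((M : ℝ) - 1)) ≥
     ∑ j ∈ Finset.range M \ {1}, KL (q j)
        (fun a => (∑ k ∈ Finset.range M \ {1}, q k a) / ((M : ℝ) - 1))) ∧
    x = KL (q 0) μ + ∑ j ∈ Finset.range M \ {0}, KL (q j) π}

/-! Taking `q₁ = q₂ = g`, the normalized geometric mean of `μ` and `π`, and `qⱼ = π` otherwise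
satisfies the constraint with equality by symmetry and has value `D(g‖μ) + D(g‖π) = 2B(μ,π)`,
since `D(q‖μ) + D(q‖π) = 2 D(q‖g) + 2B(μ,π)` for every distribution `q`.

Conversely, let `q̄` and `r̄` be the mixtures of the `qⱼ` with `j ≠ 1` and with `j ≠ 2`. The
compensation identity writes `∑_{j≠1} D(qⱼ‖π)` as `∑_{j≠1} D(qⱼ‖q̄) + (M-1) D(q̄‖π)`, and the
constraint bounds `D(q₁‖r̄)` by the first term. At a value `≤ 2B(μ,π)` this forces
`D(q̄‖π) = O(1/M)`, so `q̄`, and `r̄` which differs from it by `O(1/M)` in `ℓ¹`, are close to `π`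
in `ℓ¹`; then `D(q₁‖π) ≤ D(q₁‖r̄) + o(1)`, and the value is at least
`D(q₁‖μ) + D(q₁‖π) - o(1) ≥ 2B(μ,π) - o(1)`. -/

section KL

variable {𝓨 : Type} [Fintype 𝓨]

theorem sum_sub_sum_le_KL {q p : 𝓨 → ℝ} (hq : ∀ y, 0 ≤ q y) (hp : ∀ y, 0 ≤ p y)
    (hqp : ∀ y, 0 < q y → 0 < p y) : ∑ y, q y - ∑ y, p y ≤ KL q p := by
  rw [KL, ← Finset.sum_sub_distrib]
  refine Finset.sum_le_sum fun y _ => ?_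
  rcases (hq y).eq_or_lt with h | h
  · simp [← h, hp y]
  · have hpy := hqp y h
    have hlog := Real.log_le_sub_one_of_pos (div_pos hpy h)
    rw [← neg_le_neg_iff, ← Real.log_inv, inv_div] at hlog
    have : q y * (p y / q y - 1) = p y - q y := by field_simp
    nlinarith [mul_le_mul_of_nonneg_left hlog h.le]

theorem KL_nonneg {q p : 𝓨 → ℝ} (hq : IsProb q) (hp : IsProb p)
    (hqp : ∀ y, 0 < q y → 0 < p y) : 0 ≤ KL q p := by
  have := sum_sub_sum_le_KL hq.1 hp.1 hqp
  rw [hq.2, hp.2] at this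
  linarith

@[simp]
theorem KL_self (p : 𝓨 → ℝ) : KL p p = 0 :=
  Finset.sum_eq_zero fun y _ => by by_cases h : p y = 0 <;> simp [h]

theorem KL_eq_KL_add_sum_mul_log {q r p : 𝓨 → ℝ} (hq : ∀ y, 0 ≤ q y)
    (hqr : ∀ y, 0 < q y → 0 < r y) (hp : ∀ y, 0 < p y) :
    KL q p = KL q r + ∑ y, q y * Real.log (r y / p y) := by
  rw [KL, KL, ← Finset.sum_add_distrib]
  refine Finset.sum_congr rfl fun y _ => ?_
  rcases (hq y).eq_or_lt with h | h
  · simp [← h]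
  · rw [Real.log_div h.ne' (hp y).ne', Real.log_div h.ne' (hqr y h).ne',
      Real.log_div (hqr y h).ne' (hp y).ne']
    ring

theorem sq_sqrt_sub_sqrt_le_mul_log_div {a b : ℝ} (ha : 0 ≤ a) (hb : 0 < b) :
    (√a - √b) ^ 2 ≤ a * Real.log (a / b) - a + b := by
  rcases ha.eq_or_lt with h | h
  · simp [← h, Real.sq_sqrt hb.le]
  have hsa := Real.sqrt_pos.2 h
  have hsb := Real.sqrt_pos.2 hb
  have hlog : 1 - (√a / √b)⁻¹ ≤ Real.log (√a / √b) :=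
    Real.one_sub_inv_le_log_of_pos (div_pos hsa hsb)
  have hab : a * Real.log (a / b) = 2 * (√a) ^ 2 * Real.log (√a / √b) := by
    rw [← Real.sqrt_div' a hb.le, Real.log_sqrt (div_nonneg ha hb.le), Real.sq_sqrt ha]
    ring
  have : (√a) ^ 2 * (1 - (√a / √b)⁻¹) = (√a) ^ 2 - √a * √b := by
    field_simp
  nlinarith [mul_le_mul_of_nonneg_left hlog (sq_nonneg √a), Real.sq_sqrt ha, Real.sq_sqrt hb.le]

theorem sum_sq_sqrt_sub_sqrt_le_KL {q p : 𝓨 → ℝ} (hq : IsProb q) (hp : IsProb p)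
    (hpf : FullSupport p) : ∑ y, (√(q y) - √(p y)) ^ 2 ≤ KL q p := by
  calc ∑ y, (√(q y) - √(p y)) ^ 2
      ≤ ∑ y, (q y * Real.log (q y / p y) - q y + p y) :=
        Finset.sum_le_sum fun y _ => sq_sqrt_sub_sqrt_le_mul_log_div (hq.1 y) (hpf y)
    _ = KL q p := by
        rw [Finset.sum_add_distrib, Finset.sum_sub_distrib, hq.2, hp.2, KL]
        ring

theorem sum_abs_sub_le_two_mul_sqrt_KL {q p : 𝓨 → ℝ} (hq : IsProb q) (hp : IsProb p)
    (hpf : FullSupport p) : ∑ y, |q y - p y| ≤ 2 * √(KL q p) := by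
  have hfactor (y : 𝓨) : |q y - p y| = |√(q y) - √(p y)| * (√(q y) + √(p y)) := by
    rw [← abs_of_nonneg (by positivity : 0 ≤ √(q y) + √(p y)), ← abs_mul]
    congr 1
    linear_combination -Real.sq_sqrt (hq.1 y) + Real.sq_sqrt (hp.1 y)
  have hsum : ∑ y, (√(q y) + √(p y)) ^ 2 ≤ 2 ^ 2 := by
    calc ∑ y, (√(q y) + √(p y)) ^ 2 ≤ ∑ y, (2 * q y + 2 * p y) :=
          Finset.sum_le_sum fun y _ => by
            nlinarith [sq_nonneg (√(q y) - √(p y)), Real.sq_sqrt (hq.1 y),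
              Real.sq_sqrt (hp.1 y)]
      _ = 2 ^ 2 := by
          rw [Finset.sum_add_distrib, ← Finset.mul_sum, ← Finset.mul_sum, hq.2, hp.2]
          norm_num
  calc ∑ y, |q y - p y| = ∑ y, |√(q y) - √(p y)| * (√(q y) + √(p y)) :=
        Finset.sum_congr rfl fun y _ => hfactor y
    _ ≤ √(∑ y, |√(q y) - √(p y)| ^ 2) * √(∑ y, (√(q y) + √(p y)) ^ 2) :=
        Real.sum_mul_le_sqrt_mul_sqrt _ _ _
    _ ≤ √(KL q p) * √(2 ^ 2) := by
        simp only [sq_abs]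
        gcongr
        exact sum_sq_sqrt_sub_sqrt_le_KL hq hp hpf
    _ = 2 * √(KL q p) := by rw [Real.sqrt_sq zero_le_two, mul_comm]

end KL

section Bhattacharyya

variable {𝓨 : Type} [Fintype 𝓨] [Nonempty 𝓨] {μ π : 𝓨 → ℝ}

/-- The minimizer of `q ↦ D(q‖μ) + D(q‖π)`, see `KL_add_KL_eq`. -/
def geomMix (μ π : 𝓨 → ℝ) (y : 𝓨) : ℝ := √(μ y) * √(π y) / ∑ z, √(μ z) * √(π z)

theorem sum_sqrt_mul_sqrt_pos (hμf : FullSupport μ) (hπf : FullSupport π) :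
    0 < ∑ y, √(μ y) * √(π y) :=
  Finset.sum_pos (fun y _ => by have := hμf y; have := hπf y; positivity) univ_nonempty

theorem geomMix_pos (hμf : FullSupport μ) (hπf : FullSupport π) : FullSupport (geomMix μ π) :=
  fun y => by
    have := sum_sqrt_mul_sqrt_pos hμf hπf; have := hμf y; have := hπf y
    unfold geomMix; positivity

theorem isProb_geomMix (hμf : FullSupport μ) (hπf : FullSupport π) : IsProb (geomMix μ π) :=
  ⟨fun y => (geomMix_pos hμf hπf y).le,
    by simp only [geomMix]; rw [← Finset.sum_div, div_self (sum_sqrt_mul_sqrt_pos hμf hπf).ne']⟩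

theorem KL_add_KL_eq (hμf : FullSupport μ) (hπf : FullSupport π) {q : 𝓨 → ℝ}
    (hq : ∑ y, q y = 1) :
    KL q μ + KL q π = 2 * KL q (geomMix μ π) + 2 * Bhat μ π := by
  set Z := ∑ y, √(μ y) * √(π y)
  have hZ : 0 < Z := sum_sqrt_mul_sqrt_pos hμf hπf
  have hpoint (y : 𝓨) : q y * Real.log (q y / μ y) + q y * Real.log (q y / π y) =
      2 * (q y * Real.log (q y / geomMix μ π y)) - 2 * Real.log Z * q y := by
    by_cases h : q y = 0
    · simp [h]
    have hm := hμf y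
    have hp := hπf y
    rw [Real.log_div h hm.ne', Real.log_div h hp.ne', Real.log_div h (geomMix_pos hμf hπf y).ne',
      geomMix, Real.log_div (by positivity) hZ.ne', Real.log_mul (by positivity) (by positivity),
      Real.log_sqrt hm.le, Real.log_sqrt hp.le]
    ring
  rw [KL, KL, KL, Bhat, ← Finset.sum_add_distrib, Finset.sum_congr rfl fun y _ => hpoint y,
    Finset.sum_sub_distrib, ← Finset.mul_sum, ← Finset.mul_sum, hq]
  ring

theorem two_mul_Bhat_le_KL_add_KL (hμf : FullSupport μ) (hπf : FullSupport π) {q : 𝓨 → ℝ}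
    (hq : IsProb q) : 2 * Bhat μ π ≤ KL q μ + KL q π := by
  rw [KL_add_KL_eq hμf hπf hq.2]
  have := KL_nonneg hq (isProb_geomMix hμf hπf) fun y _ => geomMix_pos hμf hπf y
  linarith

theorem KL_geomMix_add_KL_geomMix (hμf : FullSupport μ) (hπf : FullSupport π) :
    KL (geomMix μ π) μ + KL (geomMix μ π) π = 2 * Bhat μ π := by
  rw [KL_add_KL_eq hμf hπf (isProb_geomMix hμf hπf).2, KL_self]
  ring

end Bhattacharyya

section Mixture

variable {𝓨 : Type} {ι : Type*} {s : Finset ι} {q : ι → 𝓨 → ℝ}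

def mixture (s : Finset ι) (q : ι → 𝓨 → ℝ) (y : 𝓨) : ℝ := (∑ k ∈ s, q k y) / s.card

theorem card_mul_mixture (y : 𝓨) : (s.card : ℝ) * mixture s q y = ∑ k ∈ s, q k y := by
  rcases s.eq_empty_or_nonempty with rfl | hs
  · simp
  · rw [mixture, mul_div_cancel₀ _ (by exact_mod_cast hs.card_pos.ne')]

theorem mixture_pos_of_pos (hq : ∀ k ∈ s, ∀ y, 0 ≤ q k y) {j : ι} (hj : j ∈ s) {y : 𝓨}
    (hjy : 0 < q j y) : 0 < mixture s q y :=
  div_pos ((hjy.trans_le (Finset.single_le_sum (fun k hk => hq k hk y) hj)))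
    (by exact_mod_cast (Finset.card_pos.2 ⟨j, hj⟩))

variable [Fintype 𝓨]

theorem isProb_mixture (hs : s.Nonempty) (hq : ∀ k ∈ s, IsProb (q k)) : IsProb (mixture s q) := by
  refine ⟨fun y => div_nonneg (Finset.sum_nonneg fun k hk => (hq k hk).1 y) (Nat.cast_nonneg _),
    ?_⟩
  simp only [mixture]
  rw [← Finset.sum_div, Finset.sum_comm, Finset.sum_congr rfl fun k hk => (hq k hk).2,
    Finset.sum_const, nsmul_one, div_self (by exact_mod_cast hs.card_pos.ne')]

/-- The compensation identity for relative entropy. -/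
theorem sum_KL_eq_sum_KL_mixture_add (hq : ∀ k ∈ s, ∀ y, 0 ≤ q k y) {p : 𝓨 → ℝ}
    (hp : FullSupport p) :
    ∑ k ∈ s, KL (q k) p = ∑ k ∈ s, KL (q k) (mixture s q) + s.card * KL (mixture s q) p := by
  rw [Finset.sum_congr rfl fun k hk =>
      KL_eq_KL_add_sum_mul_log (hq k hk) (fun y => mixture_pos_of_pos hq hk) hp,
    Finset.sum_add_distrib, Finset.sum_comm, KL, Finset.mul_sum]
  congr 1
  refine Finset.sum_congr rfl fun y _ => ?_
  rw [← Finset.sum_mul, ← card_mul_mixture, mul_assoc]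

theorem sum_abs_mixture_sdiff_sub_le [DecidableEq ι] {i j : ι} (hi : i ∈ s) (hj : j ∈ s)
    (hqi : IsProb (q i)) (hqj : IsProb (q j)) :
    ∑ y, |mixture (s \ {j}) q y - mixture (s \ {i}) q y| ≤ 2 / ((s.card : ℝ) - 1) := by
  have hdiff (y : 𝓨) :
      mixture (s \ {j}) q y - mixture (s \ {i}) q y = (q i y - q j y) / ((s.card : ℝ) - 1) := by
    rw [mixture, mixture, Finset.sdiff_singleton_eq_erase, Finset.sdiff_singleton_eq_erase,
      Finset.cast_card_erase_of_mem hi, Finset.cast_card_erase_of_mem hj, ← sub_div,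
      Finset.sum_erase_eq_sub hi, Finset.sum_erase_eq_sub hj]
    ring
  have hn : 0 ≤ (s.card : ℝ) - 1 := by
    rw [sub_nonneg, Nat.one_le_cast]; exact Finset.card_pos.2 ⟨i, hi⟩
  calc ∑ y, |mixture (s \ {j}) q y - mixture (s \ {i}) q y|
      ≤ ∑ y, (q i y + q j y) / ((s.card : ℝ) - 1) := Finset.sum_le_sum fun y _ => by
        rw [hdiff, abs_div, abs_of_nonneg hn]
        gcongr
        exact (abs_sub _ _).trans_eq (by rw [abs_of_nonneg (hqi.1 y), abs_of_nonneg (hqj.1 y)])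
    _ = 2 / ((s.card : ℝ) - 1) := by
        rw [← Finset.sum_div, Finset.sum_add_distrib, hqi.2, hqj.2, one_add_one_eq_two]

theorem sum_abs_mixture_sdiff_sub_le_add [DecidableEq ι] (hq : ∀ k ∈ s, IsProb (q k)) {i j : ι}
    (hi : i ∈ s) (hj : j ∈ s) (hij : i ≠ j) {p : 𝓨 → ℝ} (hp : IsProb p) (hpf : FullSupport p) :
    ∑ y, |mixture (s \ {j}) q y - p y| ≤
      2 / ((s.card : ℝ) - 1) + 2 * √(KL (mixture (s \ {i}) q) p) := by
  calc ∑ y, |mixture (s \ {j}) q y - p y|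
      ≤ ∑ y, (|mixture (s \ {j}) q y - mixture (s \ {i}) q y| + |mixture (s \ {i}) q y - p y|) :=
        Finset.sum_le_sum fun y _ => abs_sub_le _ _ _
    _ = ∑ y, |mixture (s \ {j}) q y - mixture (s \ {i}) q y| +
          ∑ y, |mixture (s \ {i}) q y - p y| := Finset.sum_add_distrib
    _ ≤ 2 / ((s.card : ℝ) - 1) + 2 * √(KL (mixture (s \ {i}) q) p) := by
        gcongr
        · exact sum_abs_mixture_sdiff_sub_le hi hj (hq i hi) (hq j hj)
        · exact sum_abs_sub_le_two_mul_sqrt_KL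
            (isProb_mixture ⟨j, by simp [hj, hij.symm]⟩ fun k hk => hq k (Finset.sdiff_subset hk))
            hp hpf

end Mixture

theorem KL_le_KL_add_sum_abs_sub_div {𝓨 : Type} [Fintype 𝓨] {q r p : 𝓨 → ℝ} (hq : IsProb q)
    (hqr : ∀ y, 0 < q y → 0 < r y) {c : ℝ} (hc : 0 < c) (hcp : ∀ y, c ≤ p y) :
    KL q p ≤ KL q r + (∑ y, |r y - p y|) / c := by
  have hp (y : 𝓨) : 0 < p y := hc.trans_le (hcp y)
  rw [KL_eq_KL_add_sum_mul_log hq.1 hqr hp, Finset.sum_div]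
  gcongr with y
  rcases (hq.1 y).eq_or_lt with h | h
  · rw [← h, zero_mul]; positivity
  rcases le_or_gt (Real.log (r y / p y)) 0 with hlog | hlog
  · exact (mul_nonpos_of_nonneg_of_nonpos h.le hlog).trans (by positivity)
  calc q y * Real.log (r y / p y) ≤ 1 * Real.log (r y / p y) := by
        gcongr
        exact hq.2 ▸ Finset.single_le_sum (fun z _ => hq.1 z) (Finset.mem_univ y)
    _ ≤ r y / p y - 1 := by rw [one_mul]; exact Real.log_le_sub_one_of_pos (div_pos (hqr y h) (hp y))
    _ = (r y - p y) / p y := by rw [sub_div, div_self (hp y).ne']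
    _ ≤ |r y - p y| / c := div_le_div₀ (abs_nonneg _) (le_abs_self _) hc (hcp y)

section LowerBound

variable {𝓨 : Type} [Fintype 𝓨] {ι : Type*} [DecidableEq ι] {s : Finset ι} {q : ι → 𝓨 → ℝ}
  {i j : ι}

theorem KL_mixture_add_mul_KL_mixture_le (hq : ∀ k ∈ s, IsProb (q k)) (hi : i ∈ s)
    (hij : i ≠ j) {π : 𝓨 → ℝ} (hπf : FullSupport π)
    (hcon : ∑ k ∈ s \ {j}, KL (q k) (mixture (s \ {j}) q) ≤
      ∑ k ∈ s \ {i}, KL (q k) (mixture (s \ {i}) q)) :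
    KL (q i) (mixture (s \ {j}) q) + ((s.card : ℝ) - 1) * KL (mixture (s \ {i}) q) π ≤
      ∑ k ∈ s \ {i}, KL (q k) π := by
  have hqs {t : Finset ι} (ht : t ⊆ s) (k : ι) (hk : k ∈ t) : IsProb (q k) := hq k (ht hk)
  have hij' : i ∈ s \ {j} := by simp [hi, hij]
  have hcard : ((s \ {i}).card : ℝ) = s.card - 1 := by
    rw [Finset.sdiff_singleton_eq_erase, Finset.cast_card_erase_of_mem hi]
  rw [sum_KL_eq_sum_KL_mixture_add (fun k hk => (hqs Finset.sdiff_subset k hk).1) hπf, hcard]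
  gcongr
  refine le_trans ?_ hcon
  refine Finset.single_le_sum (f := fun k => KL (q k) (mixture (s \ {j}) q)) (fun k hk => ?_) hij'
  exact KL_nonneg (hqs Finset.sdiff_subset k hk)
    (isProb_mixture ⟨i, hij'⟩ (hqs Finset.sdiff_subset))
    fun y => mixture_pos_of_pos (fun k hk => (hqs Finset.sdiff_subset k hk).1) hk

theorem two_mul_Bhat_sub_le [Nonempty 𝓨] {μ π : 𝓨 → ℝ} (hμ : IsProb μ) (hπ : IsProb π)
    (hμf : FullSupport μ) {c : ℝ} (hc : 0 < c) (hcπ : ∀ y, c ≤ π y)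
    (hq : ∀ k ∈ s, IsProb (q k)) (hi : i ∈ s) (hj : j ∈ s) (hij : i ≠ j)
    (hcon : ∑ k ∈ s \ {j}, KL (q k) (mixture (s \ {j}) q) ≤
      ∑ k ∈ s \ {i}, KL (q k) (mixture (s \ {i}) q)) :
    2 * Bhat μ π - (2 / ((s.card : ℝ) - 1) + 2 * √(2 * Bhat μ π / ((s.card : ℝ) - 1))) / c ≤
      KL (q i) μ + ∑ k ∈ s \ {i}, KL (q k) π := by
  have hπf : FullSupport π := fun y => hc.trans_le (hcπ y)
  set B := Bhat μ π
  set n : ℝ := (s.card : ℝ) - 1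
  set qb := mixture (s \ {i}) q
  set rb := mixture (s \ {j}) q
  have hn : 0 < n := by
    have : 1 < s.card := Finset.one_lt_card.2 ⟨i, hi, j, hj, hij⟩
    simp only [n, sub_pos, Nat.one_lt_cast, this]
  have hqi := hq i hi
  have hsub {k : ι} (t : Finset ι) (hk : k ∈ s \ t) : IsProb (q k) := hq k (Finset.sdiff_subset hk)
  have hqb : IsProb qb := isProb_mixture ⟨j, by simp [hj, hij.symm]⟩ fun k => hsub {i}
  have hrb : IsProb rb := isProb_mixture ⟨i, by simp [hi, hij]⟩ fun k => hsub {j}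
  have hrb_supp (y : 𝓨) : 0 < q i y → 0 < rb y :=
    mixture_pos_of_pos (fun k hk => (hsub {j} hk).1) (by simp [hi, hij])
  have hsplit := KL_mixture_add_mul_KL_mixture_le hq hi hij hπf hcon
  have hKLrb : 0 ≤ KL (q i) rb := KL_nonneg hqi hrb hrb_supp
  have hKLμ : 0 ≤ KL (q i) μ := KL_nonneg hqi hμ fun y _ => hμf y
  rcases le_or_gt (2 * B) (KL (q i) μ + ∑ k ∈ s \ {i}, KL (q k) π) with hle | hlt
  · have : 0 ≤ (2 / n + 2 * √(2 * B / n)) / c := by positivity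
    linarith
  have hKLqb : KL qb π ≤ 2 * B / n := by rw [le_div_iff₀' hn]; linarith
  have hl1 : ∑ y, |rb y - π y| ≤ 2 / n + 2 * √(2 * B / n) :=
    (sum_abs_mixture_sdiff_sub_le_add hq hi hj hij hπ hπf).trans (by gcongr)
  have hnKL : 0 ≤ n * KL qb π := mul_nonneg hn.le (KL_nonneg hqb hπ fun y _ => hπf y)
  calc 2 * B - (2 / n + 2 * √(2 * B / n)) / c
      ≤ KL (q i) μ + KL (q i) π - (∑ y, |rb y - π y|) / c := by
        have := two_mul_Bhat_le_KL_add_KL hμf hπf hqi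
        have : (∑ y, |rb y - π y|) / c ≤ (2 / n + 2 * √(2 * B / n)) / c := by gcongr
        linarith
    _ ≤ KL (q i) μ + KL (q i) rb := by
        linarith [KL_le_KL_add_sum_abs_sub_div hqi hrb_supp hc hcπ]
    _ ≤ KL (q i) μ + ∑ k ∈ s \ {i}, KL (q k) π := by linarith

end LowerBound

theorem Finset.sum_sdiff_singleton_eq_of_eq {ι M : Type*} [AddCommGroup M] [DecidableEq ι]
    {s : Finset ι} {f : ι → M} {i j : ι} (hi : i ∈ s) (hj : j ∈ s) (hij : f i = f j) :
    ∑ k ∈ s \ {i}, f k = ∑ k ∈ s \ {j}, f k := by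
  rw [Finset.sdiff_singleton_eq_erase, Finset.sdiff_singleton_eq_erase,
    Finset.sum_erase_eq_sub hi, Finset.sum_erase_eq_sub hj, hij]

theorem tendsto_two_div_add_two_mul_sqrt_div_div (a c : ℝ) :
    Tendsto (fun n : ℝ => (2 / n + 2 * √(a / n)) / c) atTop (𝓝 0) := by
  have hdiv (b : ℝ) : Tendsto (fun n : ℝ => b / n) atTop (𝓝 0) :=
    tendsto_const_nhds.div_atTop tendsto_id
  simpa using ((hdiv 2).add
    (((Real.continuous_sqrt.tendsto 0).comp (hdiv a)).const_mul 2)).div_const c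

section VstarSet

variable {𝓨 : Type} {μ π : 𝓨 → ℝ} {M : ℕ}

theorem div_card_range_sdiff_eq_mixture {i : ℕ} (hi : i < M) (q : ℕ → 𝓨 → ℝ) :
    (fun a => (∑ k ∈ range M \ {i}, q k a) / ((M : ℝ) - 1)) = mixture (range M \ {i}) q := by
  have hcard : ((range M \ {i}).card : ℝ) = M - 1 := by
    rw [sdiff_singleton_eq_erase, cast_card_erase_of_mem (mem_range.2 hi), card_range]
  funext a
  rw [mixture, hcard]

variable [Fintype 𝓨]

theorem le_of_mem_VstarSet [Nonempty 𝓨] (hμ : IsProb μ) (hπ : IsProb π) (hμf : FullSupport μ)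
    {c : ℝ} (hc : 0 < c) (hcπ : ∀ y, c ≤ π y) (hM : 2 ≤ M) {x : ℝ} (hx : x ∈ VstarSet μ π M) :
    2 * Bhat μ π - (2 / ((M : ℝ) - 1) + 2 * √(2 * Bhat μ π / ((M : ℝ) - 1))) / c ≤ x := by
  obtain ⟨q, hq, hcon, rfl⟩ := hx
  rw [div_card_range_sdiff_eq_mixture (by omega), div_card_range_sdiff_eq_mixture (by omega)]
    at hcon
  simpa using two_mul_Bhat_sub_le hμ hπ hμf hc hcπ (fun k hk => hq k (mem_range.1 hk))
    (mem_range.2 (by omega)) (mem_range.2 (by omega)) zero_ne_one hcon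

theorem two_mul_Bhat_mem_VstarSet [Nonempty 𝓨] (hπ : IsProb π) (hμf : FullSupport μ)
    (hπf : FullSupport π) (hM : 2 ≤ M) : 2 * Bhat μ π ∈ VstarSet μ π M := by
  set q : ℕ → 𝓨 → ℝ := fun k => if k ≤ 1 then geomMix μ π else π
  have h0 : (0 : ℕ) ∈ range M := mem_range.2 (by omega)
  have h1 : (1 : ℕ) ∈ range M := mem_range.2 (by omega)
  have hsum (f : (𝓨 → ℝ) → ℝ) :
      ∑ k ∈ range M \ {0}, f (q k) = ∑ k ∈ range M \ {1}, f (q k) :=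
    sum_sdiff_singleton_eq_of_eq h0 h1 rfl
  refine ⟨q, fun k _ => ?_, ?_, ?_⟩
  · by_cases hk : k ≤ 1
    · simpa [q, hk] using isProb_geomMix hμf hπf
    · simpa [q, hk] using hπ
  · have hmix : (fun a => (∑ k ∈ range M \ {0}, q k a) / ((M : ℝ) - 1)) =
        fun a => (∑ k ∈ range M \ {1}, q k a) / ((M : ℝ) - 1) :=
      funext fun a => by rw [hsum fun p => p a]
    rw [hmix]
    exact (hsum fun p => KL p _).ge
  · rw [sum_eq_single_of_mem 1 (by simp [h1]) fun k hk hk1 => ?_]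
    · simp [q, KL_geomMix_add_KL_geomMix hμf hπf]
    · have : ¬ k ≤ 1 := by simp only [Finset.mem_sdiff, mem_singleton] at hk; omega
      simp [q, this]

end VstarSet

theorem statement12_general (𝓨 : Type) [Fintype 𝓨] [Nonempty 𝓨]
    (μ π : 𝓨 → ℝ) (hμ : IsProb μ) (hπ : IsProb π)
    (hμf : FullSupport μ) (hπf : FullSupport π) :
    Tendsto (fun M : ℕ => sInf (VstarSet μ π M)) atTop (𝓝 (2 * Bhat μ π)) := by
  obtain ⟨c, hc, hcπ⟩ : ∃ c, 0 < c ∧ ∀ y, c ≤ π y :=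
    ⟨univ.inf' univ_nonempty π, (lt_inf'_iff _).2 fun y _ => hπf y,
      fun y => inf'_le π (mem_univ y)⟩
  have hmem (M : ℕ) (hM : 2 ≤ M) := two_mul_Bhat_mem_VstarSet hπ hμf hπf hM
  have hlow (M : ℕ) (hM : 2 ≤ M) := fun x => le_of_mem_VstarSet (x := x) hμ hπ hμf hc hcπ hM
  have hn : Tendsto (fun M : ℕ => (M : ℝ) - 1) atTop atTop :=
    tendsto_atTop_add_const_right _ (-1) tendsto_natCast_atTop_atTop
  have hgap := ((tendsto_two_div_add_two_mul_sqrt_div_div (2 * Bhat μ π) c).comp hn).const_sub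
    (2 * Bhat μ π)
  rw [sub_zero] at hgap
  refine tendsto_of_tendsto_of_tendsto_of_le_of_le' hgap tendsto_const_nhds ?_ ?_
  · filter_upwards [eventually_ge_atTop 2] with M hM using le_csInf ⟨_, hmem M hM⟩ (hlow M hM)
  · filter_upwards [eventually_ge_atTop 2] with M hM using csInf_le ⟨_, hlow M hM⟩ (hmem M hM)

/-- asymptotic efficiency in Theorem 3.
`lim_{M → ∞} V*(M) = 2·B(μ,π)`, where `V*(M)` is the value of the optimization
problem in Theorem 2. -/
theorem statement12 (𝓨 : Type) [Fintype 𝓨] [Nonempty 𝓨]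
    (μ π : 𝓨 → ℝ) (hμ : IsProb μ) (hπ : IsProb π)
    (hμf : FullSupport μ) (hπf : FullSupport π) (hne : μ ≠ π) :
    Tendsto (fun M : ℕ => sInf (VstarSet μ π M)) atTop (𝓝 (2 * Bhat μ π)) :=
  statement12_general 𝓨 μ π hμ hπ hμf hπf
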